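/- arXiv:2408.00262 — 2 statements merged into one kernel-verified Lean document; each statement's English description precedes it below -/
import Mathlib

section
/- Correspondence for C_◇: a CK-frame (X, e, ≤, R) validates every instance of the axiom C_◇: ◇(φ∨ψ) → ◇φ ∨ ◇ψ if and only if it satisfies (Cd-corr): for all x, y, z, if neither yRe nor zRe, x ≤ y, and x ≤ z, then there exists w with x ≤ w such that R[w] ⊆ ↓R[y] and R[w] ⊆ ↓R[z], where R[w] = {v : wRv} and ↓a = {v : v ≤ u for some u ∈ a}. -/
/-- Formulas of the modal language L. -/
inductive Form : Type
  | var : ℕ → Form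
  | bot : Form
  | and : Form → Form → Form
  | or : Form → Form → Form
  | imp : Form → Form → Form
  | box : Form → Form
  | dia : Form → Form

namespace Form

/-- Negation abbreviation: ¬φ := φ → ⊥. -/
def neg (φ : Form) : Form := φ.imp bot

/-- Uniform substitution. -/
def subst (σ : ℕ → Form) : Form → Form
  | var p => σ p
  | bot => bot
  | and a b => and (a.subst σ) (b.subst σ)
  | or a b => or (a.subst σ) (b.subst σ)
  | imp a b => imp (a.subst σ) (b.subst σ)
  | box a => box (a.subst σ)
  | dia a => dia (a.subst σ)

end Form

/-- Substitution instances of the axioms of a standard Hilbert axiomatisation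
of intuitionistic propositional logic (the axioms are schematic, so all
substitution instances are included). -/
inductive IPLAx : Form → Prop
  | a1 (φ ψ : Form) : IPLAx (φ.imp (ψ.imp φ))
  | a2 (φ ψ χ : Form) : IPLAx ((φ.imp (ψ.imp χ)).imp ((φ.imp ψ).imp (φ.imp χ)))
  | a3 (φ ψ : Form) : IPLAx ((φ.and ψ).imp φ)
  | a4 (φ ψ : Form) : IPLAx ((φ.and ψ).imp ψ)
  | a5 (φ ψ : Form) : IPLAx (φ.imp (ψ.imp (φ.and ψ)))
  | a6 (φ ψ : Form) : IPLAx (φ.imp (φ.or ψ))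
  | a7 (φ ψ : Form) : IPLAx (ψ.imp (φ.or ψ))
  | a8 (φ ψ χ : Form) : IPLAx ((φ.imp χ).imp ((ψ.imp χ).imp ((φ.or ψ).imp χ)))
  | a9 (φ : Form) : IPLAx (Form.bot.imp φ)

/-- Substitution instances of K_□ : □(φ→ψ) → (□φ → □ψ). -/
def KBoxAx (χ : Form) : Prop :=
  ∃ φ ψ : Form, χ = ((φ.imp ψ).box).imp ((φ.box).imp (ψ.box))

/-- Substitution instances of K_◇ : □(φ→ψ) → (◇φ → ◇ψ). -/
def KDiaAx (χ : Form) : Prop :=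
  ∃ φ ψ : Form, χ = ((φ.imp ψ).box).imp ((φ.dia).imp (ψ.dia))

/-- Axiom instances available in the calculus CK ⊕ Ax : instances of IPL
axioms, of K_□, of K_◇, or substitution instances of members of Ax. -/
def AxInst (Ax : Set Form) (φ : Form) : Prop :=
  IPLAx φ ∨ KBoxAx φ ∨ KDiaAx φ ∨ ∃ ψ ∈ Ax, ∃ σ : ℕ → Form, φ = ψ.subst σ

/-- The generalised Hilbert calculus CK ⊕ Ax deriving consecutions Γ ⊢_Ax φ:
rules (Ax), (MP), (Nec) and (El). -/
inductive Prv (Ax : Set Form) : Set Form → Form → Prop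
  | ax {Γ : Set Form} {φ : Form} : AxInst Ax φ → Prv Ax Γ φ
  | mp {Γ : Set Form} {φ ψ : Form} : Prv Ax Γ φ → Prv Ax Γ (φ.imp ψ) → Prv Ax Γ ψ
  | nec {Γ : Set Form} {φ : Form} : Prv Ax ∅ φ → Prv Ax Γ φ.box
  | el {Γ : Set Form} {φ : Form} : φ ∈ Γ → Prv Ax Γ φ

/-- A CK-frame (X, e, ≤, R): ≤ is a preorder, e is ≤-maximal (an "exploding"
world), and e R x iff x = e. -/
structure CKFrame where
  W : Type
  le : W → W → Prop
  R : W → W → Prop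
  e : W
  le_refl : ∀ x : W, le x x
  le_trans : ∀ {x y z : W}, le x y → le y z → le x z
  e_max : ∀ {x : W}, le e x → x = e
  e_R : ∀ x : W, R e x ↔ x = e

/-- A valuation on a CK-frame: each variable gets a ≤-upset containing e. -/
structure Val (F : CKFrame) where
  V : ℕ → F.W → Prop
  mono : ∀ (p : ℕ) {x y : F.W}, F.le x y → V p x → V p y
  at_e : ∀ p : ℕ, V p F.e

/-- The forcing relation M, x ⊩ φ of a CK-model (F, V). -/
def Forces (F : CKFrame) (V : Val F) : Form → F.W → Prop
  | .var p, x => V.V p x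
  | .bot, x => x = F.e
  | .and a b, x => Forces F V a x ∧ Forces F V b x
  | .or a b, x => Forces F V a x ∨ Forces F V b x
  | .imp a b, x => ∀ y : F.W, F.le x y → Forces F V a y → Forces F V b y
  | .box a, x => ∀ y z : F.W, F.le x y → F.R y z → Forces F V a z
  | .dia a, x => ∀ y : F.W, F.le x y → ∃ z : F.W, F.R y z ∧ Forces F V a z

/-- A frame validates the consecution Γ ⊢ φ if in every model on it, every
world forcing all of Γ forces φ. -/
def ValidConseq (F : CKFrame) (Γ : Set Form) (φ : Form) : Prop :=
  ∀ (V : Val F) (x : F.W), (∀ ψ ∈ Γ, Forces F V ψ x) → Forces F V φ x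

/-- A frame validates a formula φ if every world in every model on it forces φ. -/
def ValidForm (F : CKFrame) (φ : Form) : Prop :=
  ∀ (V : Val F) (x : F.W), Forces F V φ x

/-- Γ semantically entails φ on a class 𝓕 of CK-frames. -/
def SemEntails (𝓕 : Set CKFrame) (Γ : Set Form) (φ : Form) : Prop :=
  ∀ F ∈ 𝓕, ValidConseq F Γ φ

/-- (Cd-corr). -/
def CdCorr (F : CKFrame) : Prop :=
  ∀ x y z : F.W, ¬ F.R y F.e → ¬ F.R z F.e → F.le x y → F.le x z →
    ∃ w : F.W, F.le x w ∧
      (∀ v : F.W, F.R w v → ∃ u : F.W, F.R y u ∧ F.le v u) ∧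
      (∀ v : F.W, F.R w v → ∃ u : F.W, F.R z u ∧ F.le v u)

lemma forces_mono (F : CKFrame) (V : Val F) (φ : Form) :
    ∀ {x y : F.W}, F.le x y → Forces F V φ x → Forces F V φ y := by
  induction φ with
  | var p => intro x y h hx; exact V.mono p h hx
  | bot => intro x y h hx; subst hx; exact F.e_max h
  | and a b iha ihb => intro x y h hx; exact ⟨iha h hx.1, ihb h hx.2⟩
  | or a b iha ihb =>
      intro x y h hx
      cases hx with
      | inl h1 => exact Or.inl (iha h h1)
      | inr h1 => exact Or.inr (ihb h h1)
  | imp a b iha ihb => intro x y h hx z hz ha; exact hx z (F.le_trans h hz) ha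
  | box a ih => intro x y h hx u v hu hv; exact hx u v (F.le_trans h hu) hv
  | dia a ih => intro x y h hx u hu; exact hx u (F.le_trans h hu)

lemma forces_e (F : CKFrame) (V : Val F) (φ : Form) : Forces F V φ F.e := by
  induction φ with
  | var p => exact V.at_e p
  | bot => rfl
  | and a b iha ihb => exact ⟨iha, ihb⟩
  | or a b iha ihb => exact Or.inl iha
  | imp a b iha ihb =>
      intro y hy ha
      have h := F.e_max hy; subst h; exact ihb
  | box a ih =>
      intro y z hy hz
      have h := F.e_max hy; subst h
      have h := (F.e_R z).mp hz; subst h; exact ih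
  | dia a ih =>
      intro y hy
      have h := F.e_max hy; subst h
      exact ⟨F.e, (F.e_R F.e).mpr rfl, ih⟩

/-- Correspondence for C_◇: a CK-frame validates every instance of
◇(φ∨ψ) → ◇φ ∨ ◇ψ iff it satisfies (Cd-corr). -/
theorem cd_correspondence (F : CKFrame) :
    (∀ φ ψ : Form, ValidForm F (((φ.or ψ).dia).imp ((φ.dia).or (ψ.dia)))) ↔
      CdCorr F := by
  constructor
  · -- validity → (Cd-corr)
    intro h x y z hye hze hxy hxz
    -- the canonical valuation
    set Vp : ℕ → F.W → Prop := fun p v =>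
      if p = 0 then ¬ ∃ u : F.W, F.R y u ∧ F.le v u
      else if p = 1 then ¬ ∃ u : F.W, F.R z u ∧ F.le v u
      else True with hVp
    have hmono : ∀ (p : ℕ) {a b : F.W}, F.le a b → Vp p a → Vp p b := by
      intro p a b hab ha
      by_cases h0 : p = 0
      · subst h0; simp only [hVp, if_pos rfl] at ha ⊢
        rintro ⟨u, hu, hbu⟩; exact ha ⟨u, hu, F.le_trans hab hbu⟩
      · by_cases h1 : p = 1
        · subst h1; simp only [hVp, h0, if_neg, if_pos rfl, reduceIte] at ha ⊢
          rintro ⟨u, hu, hbu⟩; exact ha ⟨u, hu, F.le_trans hab hbu⟩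
        · simp [hVp, h0, h1]
    have hate : ∀ p : ℕ, Vp p F.e := by
      intro p
      by_cases h0 : p = 0
      · subst h0; simp only [hVp, if_pos rfl]
        rintro ⟨u, hu, heu⟩
        have := F.e_max heu; subst this; exact hye hu
      · by_cases h1 : p = 1
        · subst h1; simp only [hVp, h0, reduceIte]
          rintro ⟨u, hu, heu⟩
          have := F.e_max heu; subst this; exact hze hu
        · simp [hVp, h0, h1]
    set V : Val F := ⟨Vp, hmono, hate⟩ with hV
    by_contra hc
    push_neg at hc
    -- x forces ◇(p ∨ q)
    have hdia : Forces F V (((Form.var 0).or (Form.var 1)).dia) x := by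
      intro w hw
      by_cases hA : ∀ v : F.W, F.R w v → ∃ u : F.W, F.R y u ∧ F.le v u
      · rcases hc w hw hA with ⟨v, hRv, hv⟩
        refine ⟨v, hRv, Or.inr ?_⟩
        show Vp 1 v
        simp only [hVp, reduceIte]
        rintro ⟨u, hu, hvu⟩; exact hv u hu hvu
      · push_neg at hA
        rcases hA with ⟨v, hRv, hv⟩
        refine ⟨v, hRv, Or.inl ?_⟩
        show Vp 0 v
        simp only [hVp, if_pos rfl]
        rintro ⟨u, hu, hvu⟩; exact hv u hu hvu
    have hval := h (Form.var 0) (Form.var 1) V x x (F.le_refl x) hdia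
    cases hval with
    | inl hp =>
        rcases hp y hxy with ⟨v, hRv, hv⟩
        have : Vp 0 v := hv
        simp only [hVp, if_pos rfl] at this
        exact this ⟨v, hRv, F.le_refl v⟩
    | inr hq =>
        rcases hq z hxz with ⟨v, hRv, hv⟩
        have : Vp 1 v := hv
        simp only [hVp, reduceIte] at this
        exact this ⟨v, hRv, F.le_refl v⟩
  · -- (Cd-corr) → validity
    intro hcorr φ ψ V x
    intro y hxy hdia
    by_contra hc
    have hc' : ¬ (Forces F V φ.dia y ∨ Forces F V ψ.dia y) := hc
    push_neg at hc'
    obtain ⟨h1, h2⟩ := hc'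
    have h1' : ∃ a : F.W, F.le y a ∧ ∀ v : F.W, F.R a v → ¬ Forces F V φ v := by
      by_contra h; push_neg at h
      apply h1; intro a ha
      rcases h a ha with ⟨v, hv1, hv2⟩; exact ⟨v, hv1, hv2⟩
    have h2' : ∃ b : F.W, F.le y b ∧ ∀ v : F.W, F.R b v → ¬ Forces F V ψ v := by
      by_contra h; push_neg at h
      apply h2; intro b hb
      rcases h b hb with ⟨v, hv1, hv2⟩; exact ⟨v, hv1, hv2⟩
    obtain ⟨a, ha, hA⟩ := h1'
    obtain ⟨b, hb, hB⟩ := h2'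
    have hae : ¬ F.R a F.e := fun h => hA F.e h (forces_e F V φ)
    have hbe : ¬ F.R b F.e := fun h => hB F.e h (forces_e F V ψ)
    obtain ⟨w, hw, hwa, hwb⟩ := hcorr y a b hae hbe ha hb
    rcases hdia w hw with ⟨v, hRv, hor⟩
    cases hor with
    | inl hφ =>
        rcases hwa v hRv with ⟨u, hu, hvu⟩
        exact hA u hu (forces_mono F V φ hvu hφ)
    | inr hψ =>
        rcases hwb v hRv with ⟨u, hu, hvu⟩
        exact hB u hu (forces_mono F V ψ hvu hψ)
end

section
/- Let Ax be a set of L-formulas containing I_◇□: (◇φ → □ψ) → □(φ → ψ), and let Γ be a prime theory (w.r.t. Ax) with ◇π ∉ Γ. Let U_{Γ,π} = {Δ : Δ is a prime theory, {φ : □φ ∈ Γ} ⊆ Δ, and π ∉ Δ}. Then (Γ, U_{Γ,π}) is a segment. -/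
/-- A theory: a deductively closed set of formulas. -/
def Theory (Ax : Set Form) (Γ : Set Form) : Prop := ∀ φ : Form, Prv Ax Γ φ → φ ∈ Γ

/-- A set of formulas is prime if φ∨ψ ∈ Γ implies φ ∈ Γ or ψ ∈ Γ. -/
def PrimeSet (Γ : Set Form) : Prop := ∀ φ ψ : Form, φ.or ψ ∈ Γ → φ ∈ Γ ∨ ψ ∈ Γ

/-- A prime theory (possibly inconsistent). -/
def PrimeTheory (Ax : Set Form) (Γ : Set Form) : Prop := Theory Ax Γ ∧ PrimeSet Γ

/-- (Γ, U) is a segment: Γ is a prime theory, U a set of prime theories,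
□φ ∈ Γ implies φ ∈ Δ for all Δ ∈ U, and ◇φ ∈ Γ implies φ ∈ Δ for some Δ ∈ U. -/
def IsSegment (Ax : Set Form) (Γ : Set Form) (U : Set (Set Form)) : Prop :=
  PrimeTheory Ax Γ ∧ (∀ Δ ∈ U, PrimeTheory Ax Δ) ∧
  (∀ φ : Form, φ.box ∈ Γ → ∀ Δ ∈ U, φ ∈ Δ) ∧
  (∀ φ : Form, φ.dia ∈ Γ → ∃ Δ ∈ U, φ ∈ Δ)

/-- The axiom N_◇ : ◇⊥ → ⊥. -/
def NdAx : Form := (Form.bot.dia).imp Form.bot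

/-- The axiom N_◇□ : ◇⊥ → □⊥. -/
def NdbAx : Form := (Form.bot.dia).imp (Form.bot.box)

/-- The axiom C_◇ : ◇(p ∨ q) → ◇p ∨ ◇q. -/
def CdAx : Form :=
  (((Form.var 0).or (Form.var 1)).dia).imp (((Form.var 0).dia).or ((Form.var 1).dia))

/-- The axiom I_◇□ : (◇p → □q) → □(p → q). -/
def IdbAx : Form :=
  (((Form.var 0).dia).imp ((Form.var 1).box)).imp (((Form.var 0).imp (Form.var 1)).box)

/-!
If `◇φ ∈ Γ`, then `{ψ | □ψ ∈ Γ} ∪ {φ}` does not derive `π`: otherwise the deduction theorem and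
the closure of `Γ` under necessitation and `K_□` give `□(φ → π) ∈ Γ`, hence `◇π ∈ Γ` by `K_◇`.
A prime theory extending that set and avoiding `π` (Lindenbaum's lemma, via Teichmüller–Tukey,
since non-derivability of `π` has finite character) is then the witness in `U_{Γ,π}` for `◇φ`.
-/

namespace Prv

variable {Ax Γ Δ : Set Form} {φ ψ : Form}

theorem mono (h : Prv Ax Γ φ) (hΓΔ : Γ ⊆ Δ) : Prv Ax Δ φ := by
  induction h generalizing Δ with
  | ax h => exact ax h
  | mp _ _ ih₁ ih₂ => exact mp (ih₁ hΓΔ) (ih₂ hΓΔ)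
  | nec h => exact nec h
  | el h => exact el (hΓΔ h)

theorem ipl (h : IPLAx φ) : Prv Ax Γ φ := ax (Or.inl h)

theorem imp_intro (h : Prv Ax Γ φ) : Prv Ax Γ (ψ.imp φ) := mp h (ipl (.a1 φ ψ))

theorem imp_self : Prv Ax Γ (φ.imp φ) :=
  mp (ipl (.a1 φ φ)) (mp (ipl (.a1 φ (φ.imp φ))) (ipl (.a2 φ (φ.imp φ) φ)))

theorem imp_of_insert (h : Prv Ax (insert ψ Γ) φ) : Prv Ax Γ (ψ.imp φ) := by
  generalize hΔ : insert ψ Γ = Δ at h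
  induction h with
  | ax h => exact (ax h).imp_intro
  | mp _ _ ih₁ ih₂ => exact mp (ih₁ hΔ) (mp (ih₂ hΔ) (ipl (.a2 ψ _ _)))
  | nec h => exact (nec h).imp_intro
  | el h =>
    subst hΔ
    rcases h with rfl | h
    · exact imp_self
    · exact (el h).imp_intro

theorem exists_finite_subset (h : Prv Ax Γ φ) : ∃ Γ₀ ⊆ Γ, Γ₀.Finite ∧ Prv Ax Γ₀ φ := by
  induction h with
  | ax h => exact ⟨∅, Set.empty_subset _, Set.finite_empty, ax h⟩
  | mp _ _ ih₁ ih₂ =>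
    obtain ⟨A, hA, hAfin, pA⟩ := ih₁
    obtain ⟨B, hB, hBfin, pB⟩ := ih₂
    exact ⟨A ∪ B, Set.union_subset hA hB, hAfin.union hBfin,
      mp (pA.mono Set.subset_union_left) (pB.mono Set.subset_union_right)⟩
  | nec h => exact ⟨∅, Set.empty_subset _, Set.finite_empty, nec h⟩
  | @el _ φ h => exact ⟨{φ}, Set.singleton_subset_iff.2 h, Set.finite_singleton φ, el rfl⟩

end Prv

namespace Theory

variable {Ax Γ S : Set Form} {φ π χ : Form}

theorem box_mem_of_prv (hΓ : Theory Ax Γ) (h : Prv Ax S χ) (hS : ∀ ψ ∈ S, ψ.box ∈ Γ) :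
    χ.box ∈ Γ := by
  induction h with
  | ax h => exact hΓ _ (.nec (.ax h))
  | @mp _ α χ _ _ ih₁ ih₂ =>
    exact hΓ _ (.mp (.el (ih₁ hS)) (.mp (.el (ih₂ hS)) (.ax (Or.inr (Or.inl ⟨α, χ, rfl⟩)))))
  | nec h => exact hΓ _ (.nec (.nec h))
  | el h => exact hS _ h

theorem dia_mem_of_box_imp_mem (hΓ : Theory Ax Γ) (himp : (φ.imp π).box ∈ Γ)
    (hφ : φ.dia ∈ Γ) : π.dia ∈ Γ :=
  hΓ _ (.mp (.el hφ) (.mp (.el himp) (.ax (Or.inr (Or.inr (Or.inl ⟨φ, π, rfl⟩))))))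

theorem not_prv_insert_of_dia_mem (hΓ : Theory Ax Γ) (hφ : φ.dia ∈ Γ) (hπ : π.dia ∉ Γ) :
    ¬ Prv Ax (insert φ {ψ | ψ.box ∈ Γ}) π := fun h =>
  hπ (hΓ.dia_mem_of_box_imp_mem (hΓ.box_mem_of_prv h.imp_of_insert fun _ hψ => hψ) hφ)

end Theory

section Lindenbaum

variable {Ax Δ : Set Form} {π : Form}

theorem isOfFiniteCharacter_not_prv (Ax : Set Form) (π : Form) :
    Order.IsOfFiniteCharacter {Δ : Set Form | ¬ Prv Ax Δ π} := by
  refine fun Δ => ⟨fun hΔ Δ₀ hΔ₀ _ h => hΔ (h.mono hΔ₀), fun hfin h => ?_⟩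
  obtain ⟨Δ₀, hΔ₀, hΔ₀fin, h₀⟩ := h.exists_finite_subset
  exact hfin Δ₀ hΔ₀ hΔ₀fin h₀

theorem primeTheory_of_maximal_not_prv (hΔ : Maximal (fun Δ => ¬ Prv Ax Δ π) Δ) :
    PrimeTheory Ax Δ := by
  have prv_imp_of_not_mem : ∀ φ ∉ Δ, Prv Ax Δ (φ.imp π) := fun φ hφ =>
    Prv.imp_of_insert <| by_contra fun h =>
      hφ (hΔ.2 h (Set.subset_insert φ Δ) (Set.mem_insert φ Δ))
  refine ⟨fun φ hφ => by_contra fun h => hΔ.1 (.mp hφ (prv_imp_of_not_mem φ h)), ?_⟩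
  intro φ ψ hor
  by_contra! h
  exact hΔ.1 (.mp (.el hor) (.mp (prv_imp_of_not_mem ψ h.2)
    (.mp (prv_imp_of_not_mem φ h.1) (.ipl (.a8 φ ψ π)))))

theorem exists_primeTheory_superset_of_not_prv (h : ¬ Prv Ax Δ π) :
    ∃ Δ' : Set Form, Δ ⊆ Δ' ∧ PrimeTheory Ax Δ' ∧ π ∉ Δ' := by
  obtain ⟨Δ', hΔΔ', hmax⟩ := (isOfFiniteCharacter_not_prv Ax π).exists_maximal h
  exact ⟨Δ', hΔΔ', primeTheory_of_maximal_not_prv hmax, fun hπ => hmax.1 (.el hπ)⟩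

end Lindenbaum

theorem p_segment_general (Ax : Set Form) (Γ : Set Form)
    (hΓ : PrimeTheory Ax Γ) (π : Form) (hπ : π.dia ∉ Γ) :
    IsSegment Ax Γ
      {Δ : Set Form | PrimeTheory Ax Δ ∧ (∀ φ : Form, φ.box ∈ Γ → φ ∈ Δ) ∧ π ∉ Δ} := by
  refine ⟨hΓ, fun Δ hΔ => hΔ.1, fun φ hφ Δ hΔ => hΔ.2.1 φ hφ, fun φ hφ => ?_⟩
  obtain ⟨Δ, hsub, hΔ, hπΔ⟩ :=
    exists_primeTheory_superset_of_not_prv (hΓ.1.not_prv_insert_of_dia_mem hφ hπ)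
  exact ⟨Δ, ⟨hΔ, fun ψ hψ => hsub (Set.mem_insert_of_mem φ hψ), hπΔ⟩, hsub (Set.mem_insert φ _)⟩

/-- If I_◇□ ∈ Ax, Γ is a prime theory and ◇π ∉ Γ, then
(Γ, U_{Γ,π}) is a segment, where U_{Γ,π} is the set of prime theories
containing {φ : □φ ∈ Γ} and avoiding π. -/
theorem p_segment (Ax : Set Form) (hIdb : IdbAx ∈ Ax) (Γ : Set Form)
    (hΓ : PrimeTheory Ax Γ) (π : Form) (hπ : π.dia ∉ Γ) :
    IsSegment Ax Γ
      {Δ : Set Form | PrimeTheory Ax Δ ∧ (∀ φ : Form, φ.box ∈ Γ → φ ∈ Δ) ∧ π ∉ Δ} :=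
  p_segment_general Ax Γ hΓ π hπ
end
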